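/- (Entanglement cannot increase under Gaussian classical mixing.) Let σ be a real symmetric 2n×2n matrix with σ + iΩ ≥ 0 and let τ be any real symmetric positive semidefinite 2n×2n matrix. Then σ + τ also satisfies (σ+τ) + iΩ ≥ 0, and for any bipartition of the modes the smallest partially transposed symplectic eigenvalues satisfy ν̃₋(σ + τ) ≥ ν̃₋(σ); consequently the logarithmic negativity satisfies E_N(σ + τ) ≤ E_N(σ). -/

import Mathlib

open Matrix
open scoped ComplexOrder

open Classical in
/-- The eigenvalues of a matrix in increasing order (junk value `0` if not Hermitian). -/
noncomputable def eigUp {d : ℕ} (M : Matrix (Fin d) (Fin d) ℝ) : Fin d → ℝ :=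
  if h : M.IsHermitian then h.eigenvalues ∘ Tuple.sort h.eigenvalues else 0

/-- The eigenvalues of a matrix in decreasing order. -/
noncomputable def eigDown {d : ℕ} (M : Matrix (Fin d) (Fin d) ℝ) (j : Fin d) : ℝ :=
  eigUp M j.rev

/-- The standard symplectic form on `2n` canonical variables: block diagonal with
blocks `[[0,1],[-1,0]]`. -/
def Omega (n : ℕ) : Matrix (Fin (2*n)) (Fin (2*n)) ℝ :=
  Matrix.of fun i j =>
    if (i : ℕ) + 1 = (j : ℕ) ∧ (i : ℕ) % 2 = 0 then 1
    else if (j : ℕ) + 1 = (i : ℕ) ∧ (j : ℕ) % 2 = 0 then -1 else 0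

/-- Partial transposition matrix `T = 𝟙₂^{⊕ l} ⊕ σz^{⊕ (n-l)}` for the bipartition of the
first `l` versus the last `n - l` modes. -/
def Tmat (n l : ℕ) : Matrix (Fin (2*n)) (Fin (2*n)) ℝ :=
  Matrix.diagonal fun i => if (i : ℕ) / 2 < l ∨ (i : ℕ) % 2 = 0 then 1 else -1

/-- The partially transposed symplectic form `Ω̃ = T Ω T`. -/
def OmegaPT (n l : ℕ) : Matrix (Fin (2*n)) (Fin (2*n)) ℝ :=
  Tmat n l * Omega n * Tmat n l

open Classical in
/-- The positive square root of a positive semidefinite matrix (junk value `0` otherwise). -/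
noncomputable def msqrt {d : ℕ} (M : Matrix (Fin d) (Fin d) ℝ) : Matrix (Fin d) (Fin d) ℝ :=
  if h : M.PosSemidef then
    (h.1.eigenvectorUnitary : Matrix (Fin d) (Fin d) ℝ) *
      diagonal ((↑) ∘ (√·) ∘ h.1.eigenvalues) *
      (star h.1.eigenvectorUnitary : Matrix (Fin d) (Fin d) ℝ)
  else 0

/-- `σ + iΩ ≥ 0`: the Robertson–Schrödinger condition for a real symmetric matrix `σ`
to be a bona fide covariance matrix. -/
def IsCM (n : ℕ) (σ : Matrix (Fin (2*n)) (Fin (2*n)) ℝ) : Prop :=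
  σ.IsSymm ∧
    (σ.map (Complex.ofReal ·) + Complex.I • (Omega n).map (Complex.ofReal ·)).PosSemidef

/-- `ν̃₋²`, the square of the smallest partially transposed symplectic eigenvalue of `σ`, for
the bipartition of the first `l` versus the remaining modes: the smallest eigenvalue of
`σ^{1/2} Ω̃ᵀ σ Ω̃ σ^{1/2}`. -/
noncomputable def nuSq (n l : ℕ) (σ : Matrix (Fin (2*n)) (Fin (2*n)) ℝ) : ℝ :=
  sInf (spectrum ℝ (msqrt σ * (OmegaPT n l)ᵀ * σ * OmegaPT n l * msqrt σ))

/-- `ν̃₋`, the smallest partially transposed symplectic eigenvalue of `σ`. -/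
noncomputable def nuMin (n l : ℕ) (σ : Matrix (Fin (2*n)) (Fin (2*n)) ℝ) : ℝ :=
  Real.sqrt (nuSq n l σ)

/-- The logarithmic negativity `E_N(σ) = max (0, −log₂ ν̃₋)`. -/
noncomputable def logNeg (n l : ℕ) (σ : Matrix (Fin (2*n)) (Fin (2*n)) ℝ) : ℝ :=
  max 0 (-(Real.logb 2 (nuMin n l σ)))

/-! The Robertson–Schrödinger condition `σ + iΩ ≥ 0` survives adding `τ ≥ 0`, and it forces
`σ > 0`: a real vector `x` with `σ x = 0` is a null vector of the Hermitian form of `σ + iΩ`,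
hence lies in its kernel, so `Ω x = 0` and `x = 0`.

`ν̃₋²` is the least eigenvalue of `√σ B √σ` with `B = Ω̃ᵀ σ Ω̃`. This number is monotone in `B`
for the Loewner order, because conjugation preserves that order, and it is also monotone in `σ`,
because `√σ B √σ = (√σ √B)(√B √σ)` and `√B σ √B = (√B √σ)(√σ √B)` have the same spectrum.
Passing from `σ` to `σ + τ` increases both arguments, so `ν̃₋` cannot decrease. Since `σ > 0` and
`Ω̃` is invertible, `ν̃₋(σ) > 0`, and then `E_N = max(0, −log₂ ν̃₋)` cannot increase. -/

open scoped MatrixOrder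

namespace Matrix

variable {ι : Type*} [Fintype ι]

theorem spectrum_mul_comm [DecidableEq ι] {K : Type*} [Field K] (A B : Matrix ι ι K) :
    spectrum K (A * B) = spectrum K (B * A) := by
  ext μ
  simp only [mem_spectrum_iff_isRoot_charpoly, charpoly_mul_comm]

theorem sInf_spectrum_le_sInf_spectrum [DecidableEq ι] [Nonempty ι] {A B : Matrix ι ι ℝ}
    (hA : IsSelfAdjoint A) (hB : IsSelfAdjoint B) (hAB : A ≤ B) :
    sInf (spectrum ℝ A) ≤ sInf (spectrum ℝ B) := by
  have hA_ge : algebraMap ℝ _ (sInf (spectrum ℝ A)) ≤ A :=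
    (algebraMap_le_iff_le_spectrum hA).2 fun _ hx => csInf_le (finite_spectrum A).bddBelow hx
  exact le_csInf (ContinuousFunctionalCalculus.spectrum_nonempty B hB)
    ((algebraMap_le_iff_le_spectrum hB).1 (hA_ge.trans hAB))

theorem sInf_spectrum_pos [DecidableEq ι] [Nonempty ι] {A : Matrix ι ι ℝ}
    (hA : IsStrictlyPositive A) : 0 < sInf (spectrum ℝ A) :=
  hA.spectrum_pos <| (ContinuousFunctionalCalculus.spectrum_nonempty A hA.isSelfAdjoint).csInf_mem
    (finite_spectrum A)

theorem spectrum_sqrt_mul_mul_sqrt_comm [DecidableEq ι] {A B : Matrix ι ι ℝ}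
    (hA : 0 ≤ A) (hB : 0 ≤ B) :
    spectrum ℝ (CFC.sqrt A * B * CFC.sqrt A) = spectrum ℝ (CFC.sqrt B * A * CFC.sqrt B) := by
  conv_lhs => rw [← CFC.sqrt_mul_sqrt_self B]
  conv_rhs => rw [← CFC.sqrt_mul_sqrt_self A]
  simpa only [mul_assoc] using
    spectrum_mul_comm (CFC.sqrt A * CFC.sqrt B) (CFC.sqrt B * CFC.sqrt A)

theorem sInf_spectrum_sqrt_mul_mul_sqrt_mono [DecidableEq ι] [Nonempty ι]
    {A A' B B' : Matrix ι ι ℝ} (hA : 0 ≤ A) (hB : 0 ≤ B) (hAA' : A ≤ A') (hBB' : B ≤ B') :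
    sInf (spectrum ℝ (CFC.sqrt A * B * CFC.sqrt A)) ≤
      sInf (spectrum ℝ (CFC.sqrt A' * B' * CFC.sqrt A')) := by
  have hA' : 0 ≤ A' := hA.trans hAA'
  have hB' : 0 ≤ B' := hB.trans hBB'
  calc sInf (spectrum ℝ (CFC.sqrt A * B * CFC.sqrt A))
      ≤ sInf (spectrum ℝ (CFC.sqrt A * B' * CFC.sqrt A)) :=
        sInf_spectrum_le_sInf_spectrum
          (conjugate_nonneg_of_nonneg hB (CFC.sqrt_nonneg A)).isSelfAdjoint
          (conjugate_nonneg_of_nonneg hB' (CFC.sqrt_nonneg A)).isSelfAdjoint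
          (conjugate_le_conjugate_of_nonneg hBB' (CFC.sqrt_nonneg A))
    _ = sInf (spectrum ℝ (CFC.sqrt B' * A * CFC.sqrt B')) := by
        rw [spectrum_sqrt_mul_mul_sqrt_comm hA hB']
    _ ≤ sInf (spectrum ℝ (CFC.sqrt B' * A' * CFC.sqrt B')) :=
        sInf_spectrum_le_sInf_spectrum
          (conjugate_nonneg_of_nonneg hA (CFC.sqrt_nonneg B')).isSelfAdjoint
          (conjugate_nonneg_of_nonneg hA' (CFC.sqrt_nonneg B')).isSelfAdjoint
          (conjugate_le_conjugate_of_nonneg hAA' (CFC.sqrt_nonneg B'))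
    _ = sInf (spectrum ℝ (CFC.sqrt A' * B' * CFC.sqrt A')) := by
        rw [spectrum_sqrt_mul_mul_sqrt_comm hA' hB']

theorem PosSemidef.map_ofReal {A : Matrix ι ι ℝ} (hA : A.PosSemidef) :
    (A.map (Complex.ofReal ·)).PosSemidef := by
  classical
  obtain ⟨B, rfl⟩ := CStarAlgebra.nonneg_iff_eq_star_mul_self.mp hA.nonneg
  rw [star_eq_conjTranspose, show (Complex.ofReal ·) = ⇑Complex.ofRealHom from rfl,
    Matrix.map_mul, conjTranspose_map (⇑Complex.ofRealHom) fun x => (Complex.conj_ofReal x).symm]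
  exact posSemidef_conjTranspose_mul_self _

theorem star_ofReal_dotProduct_map_ofReal_mulVec (A : Matrix ι ι ℝ) (x : ι → ℝ) :
    star (fun i => (x i : ℂ)) ⬝ᵥ (A.map (Complex.ofReal ·) *ᵥ fun i => (x i : ℂ)) =
      ((x ⬝ᵥ A *ᵥ x : ℝ) : ℂ) := by
  simp [dotProduct, mulVec, Complex.ofReal_sum, Complex.ofReal_mul]

theorem map_ofReal_mulVec (A : Matrix ι ι ℝ) (x : ι → ℝ) :
    (A.map (Complex.ofReal ·) *ᵥ fun i => (x i : ℂ)) = fun i => ((A *ᵥ x) i : ℂ) := by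
  ext i
  simp [mulVec, dotProduct, Complex.ofReal_sum]

end Matrix

theorem Omega_transpose (n : ℕ) : (Omega n)ᵀ = -Omega n := by
  ext i j
  rw [transpose_apply, neg_apply]
  simp only [Omega, of_apply]
  grind

theorem Omega_mul_self (n : ℕ) : Omega n * Omega n = -1 := by
  ext i j
  let k : Fin (2 * n) := ⟨if (i : ℕ) % 2 = 0 then i + 1 else i - 1, by split_ifs <;> omega⟩
  rw [mul_apply, Finset.sum_eq_single k]
  · rw [neg_apply, one_apply]
    simp only [k, Omega, of_apply, Fin.ext_iff]
    grind
  · intro m _ hm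
    simp only [k, Omega, of_apply, ne_eq, Fin.ext_iff] at hm ⊢
    grind
  · simp

theorem isUnit_Omega (n : ℕ) : IsUnit (Omega n) :=
  IsUnit.of_mul_eq_one (-Omega n) (by rw [mul_neg, Omega_mul_self, neg_neg])

theorem Tmat_mul_self (n l : ℕ) : Tmat n l * Tmat n l = 1 := by
  rw [Tmat, diagonal_mul_diagonal, ← diagonal_one]
  congr 1
  ext i
  split_ifs <;> norm_num

theorem isUnit_OmegaPT (n l : ℕ) : IsUnit (OmegaPT n l) :=
  have hT : IsUnit (Tmat n l) := IsUnit.of_mul_eq_one _ (Tmat_mul_self n l)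
  (hT.mul (isUnit_Omega n)).mul hT

theorem dotProduct_Omega_mulVec_self (n : ℕ) (x : Fin (2 * n) → ℝ) : x ⬝ᵥ Omega n *ᵥ x = 0 := by
  have h : x ⬝ᵥ Omega n *ᵥ x = -(x ⬝ᵥ Omega n *ᵥ x) := by
    conv_lhs => rw [dotProduct_mulVec, ← mulVec_transpose, Omega_transpose, dotProduct_comm]
    rw [neg_mulVec, dotProduct_neg]
  linarith

namespace IsCM

variable {n : ℕ} {σ : Matrix (Fin (2 * n)) (Fin (2 * n)) ℝ}

theorem star_ofReal_dotProduct_mulVec (x : Fin (2 * n) → ℝ) :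
    star (fun i => (x i : ℂ)) ⬝ᵥ
        ((σ.map (Complex.ofReal ·) + Complex.I • (Omega n).map (Complex.ofReal ·)) *ᵥ
          fun i => (x i : ℂ)) = ((x ⬝ᵥ σ *ᵥ x : ℝ) : ℂ) := by
  rw [add_mulVec, smul_mulVec, dotProduct_add, dotProduct_smul,
    star_ofReal_dotProduct_map_ofReal_mulVec, star_ofReal_dotProduct_map_ofReal_mulVec,
    dotProduct_Omega_mulVec_self]
  simp

theorem posSemidef (h : IsCM n σ) : σ.PosSemidef := by
  refine .of_dotProduct_mulVec_nonneg (isHermitian_iff_isSymm.2 h.1) fun x => ?_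
  have hx := h.2.dotProduct_mulVec_nonneg fun i => (x i : ℂ)
  rw [star_ofReal_dotProduct_mulVec, Complex.zero_le_real] at hx
  simpa using hx

theorem posDef (h : IsCM n σ) : σ.PosDef := by
  have hσ := h.posSemidef
  refine .of_dotProduct_mulVec_pos hσ.1 fun x hx =>
    (hσ.dotProduct_mulVec_nonneg x).lt_of_ne fun hx0 => hx ?_
  have hσx : σ *ᵥ x = 0 := (hσ.dotProduct_mulVec_zero_iff x).1 hx0.symm
  have hHx := (h.2.dotProduct_mulVec_zero_iff fun i => (x i : ℂ)).1 (by
    rw [star_ofReal_dotProduct_mulVec, hσx, dotProduct_zero, Complex.ofReal_zero])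
  have hΩx : Omega n *ᵥ x = 0 := by
    ext i
    simpa [add_mulVec, smul_mulVec, map_ofReal_mulVec, hσx] using congrFun hHx i
  exact mulVec_injective_iff_isUnit.2 (isUnit_Omega n) (hΩx.trans (mulVec_zero _).symm)

theorem add_posSemidef (h : IsCM n σ) {τ : Matrix (Fin (2 * n)) (Fin (2 * n)) ℝ}
    (hτ : τ.PosSemidef) : IsCM n (σ + τ) := by
  refine ⟨h.1.add (isHermitian_iff_isSymm.1 hτ.1), ?_⟩
  rw [Matrix.map_add _ (fun a b => Complex.ofReal_add a b), add_right_comm]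
  exact h.2.add hτ.map_ofReal

end IsCM

theorem msqrt_eq_cfcSqrt {d : ℕ} {M : Matrix (Fin d) (Fin d) ℝ} (hM : M.PosSemidef) :
    msqrt M = CFC.sqrt M := by
  rw [CFC.sqrt_eq_real_sqrt M hM.nonneg, cfcₙ_eq_cfc, hM.1.cfc_eq, IsHermitian.cfc, msqrt,
    dif_pos hM, Unitary.conjStarAlgAut_apply]
  rfl

section nuSq

variable {n : ℕ} (l : ℕ) {σ : Matrix (Fin (2 * n)) (Fin (2 * n)) ℝ}

theorem nuSq_eq_sInf_spectrum (hσ : σ.PosSemidef) :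
    nuSq n l σ = sInf (spectrum ℝ
      (CFC.sqrt σ * (star (OmegaPT n l) * σ * OmegaPT n l) * CFC.sqrt σ)) := by
  simp only [nuSq, msqrt_eq_cfcSqrt hσ, star_eq_conjTranspose,
    conjTranspose_eq_transpose_of_trivial, mul_assoc]

theorem nuSq_le_nuSq_add [NeZero n] {τ : Matrix (Fin (2 * n)) (Fin (2 * n)) ℝ}
    (hσ : σ.PosSemidef) (hτ : τ.PosSemidef) : nuSq n l σ ≤ nuSq n l (σ + τ) := by
  have hle : σ ≤ σ + τ := le_add_of_nonneg_right hτ.nonneg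
  rw [nuSq_eq_sInf_spectrum l hσ, nuSq_eq_sInf_spectrum l (hσ.add hτ)]
  exact sInf_spectrum_sqrt_mul_mul_sqrt_mono hσ.nonneg
    (star_left_conjugate_nonneg hσ.nonneg _) hle (star_left_conjugate_le_conjugate hle _)

theorem nuSq_pos [NeZero n] (hσ : σ.PosDef) : 0 < nuSq n l σ := by
  have hσ' : IsStrictlyPositive σ := hσ.isStrictlyPositive
  have hB : IsStrictlyPositive (star (OmegaPT n l) * σ * OmegaPT n l) :=
    (isUnit_OmegaPT n l).isStrictlyPositive_star_left_conjugate_iff.2 hσ'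
  have hS : IsUnit (CFC.sqrt σ) := hσ'.isUnit_cfcSqrt σ
  rw [nuSq_eq_sInf_spectrum l hσ.posSemidef]
  exact sInf_spectrum_pos ((hS.isStrictlyPositive_iff_conjugate_of_isSelfAdjoint _ _
    (CFC.sqrt_nonneg σ).isSelfAdjoint).2 hB)

end nuSq

theorem gaussian_mixing_monotonicity_general (n : ℕ) (l : ℕ)
    (σ τ : Matrix (Fin (2*n)) (Fin (2*n)) ℝ)
    (hCM : IsCM n σ) (hτ : τ.PosSemidef) :
    IsCM n (σ + τ) ∧ nuMin n l σ ≤ nuMin n l (σ + τ) ∧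
      logNeg n l (σ + τ) ≤ logNeg n l σ := by
  obtain rfl | hn := eq_or_ne n 0
  · rw [show τ = 0 from ext fun i => i.elim0, add_zero]
    exact ⟨hCM, le_rfl, le_rfl⟩
  have : NeZero n := ⟨hn⟩
  have hν : nuMin n l σ ≤ nuMin n l (σ + τ) :=
    Real.sqrt_le_sqrt (nuSq_le_nuSq_add l hCM.posSemidef hτ)
  have hν_pos : 0 < nuMin n l σ := Real.sqrt_pos.2 (nuSq_pos l hCM.posDef)
  exact ⟨hCM.add_posSemidef hτ, hν,
    max_le_max le_rfl (neg_le_neg (Real.logb_le_logb_of_le one_lt_two hν_pos hν))⟩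

/-- Entanglement cannot increase under Gaussian classical mixing: if `σ` is a covariance
matrix and `τ ≥ 0`, then `σ + τ` is a covariance matrix, `ν̃₋(σ + τ) ≥ ν̃₋(σ)` and
`E_N(σ + τ) ≤ E_N(σ)` for any bipartition. -/
theorem gaussian_mixing_monotonicity (n : ℕ) (l : ℕ) (hl : l ≤ n)
    (σ τ : Matrix (Fin (2*n)) (Fin (2*n)) ℝ)
    (hCM : IsCM n σ) (hτ : τ.PosSemidef) :
    IsCM n (σ + τ) ∧ nuMin n l σ ≤ nuMin n l (σ + τ) ∧
      logNeg n l (σ + τ) ≤ logNeg n l σ :=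
  gaussian_mixing_monotonicity_general n l σ τ hCM hτ
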